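/- Let G be a finite group, H and K subgroups of G, α an irreducible character of H, and β an irreducible character of K. Then the inner product [(α^G)_K, β] of the restriction to K of the induced character α^G with β is at least [α_{H∩K}, β_{H∩K}], the inner product of the restrictions of α and β to H ∩ K. -/

import Mathlib

open scoped BigOperators Classical ComplexOrder

noncomputable section

/-- Inner product of class functions on a finite group. -/
def charInner (G : Type*) [Group G] [Fintype G] (f g : G → ℂ) : ℂ :=
  (Fintype.card G : ℂ)⁻¹ * ∑ x : G, f x * (starRingEnd ℂ) (g x)

/-- `χ` is the character of some finite-dimensional complex representation. -/
def IsChar (G : Type*) [Group G] (χ : G → ℂ) : Prop :=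
  ∃ (n : ℕ) (ρ : Representation ℂ G (Fin n → ℂ)),
    ∀ g : G, χ g = LinearMap.trace ℂ (Fin n → ℂ) (ρ g)

/-- Irreducible character: a character of norm one. -/
def IsIrrChar (G : Type*) [Group G] [Fintype G] (χ : G → ℂ) : Prop :=
  IsChar G χ ∧ charInner G χ χ = 1

/-- Restriction of a character of `H` to a smaller subgroup `K ≤ H`. -/
def resChar {G : Type*} [Group G] {K H : Subgroup G} (h : K ≤ H) (φ : H → ℂ) :
    K → ℂ := fun k => φ (Subgroup.inclusion h k)

/-- Induced class function from a subgroup `H` up to `G`. -/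
def inducedChar {G : Type*} [Group G] [Fintype G] (H : Subgroup G) (α : H → ℂ) :
    G → ℂ := fun g =>
  (Fintype.card H : ℂ)⁻¹ *
    ∑ x : G, if h : x * g * x⁻¹ ∈ H then α ⟨x * g * x⁻¹, h⟩ else 0

/-- Induced class function from a subgroup `A` up to a larger subgroup `B`. -/
def inducedCharSub {G : Type*} [Group G] [Fintype G] {A B : Subgroup G}
    (_ : A ≤ B) (η : A → ℂ) : B → ℂ := fun b =>
  (Fintype.card A : ℂ)⁻¹ *
    ∑ x : B, if h : (x : G) * (b : G) * (x : G)⁻¹ ∈ A then η ⟨_, h⟩ else 0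
/-!
By Mackey's formula, `[(α^G)_K, β] = |H|⁻¹ ∑_{x ∈ G} T x`, where `T x` is, up to the positive
factor `|K ∩ x⁻¹ H x| / |K|`, the inner product over `K ∩ x⁻¹ H x` of the characters
`k ↦ α (x k x⁻¹)` and `β`. So `T x ≥ 0`, because the average of a character is the dimension of
its invariants. `T` is constant on the double cosets `H x K`, and
`T 1 = |H ∩ K| / |K| · [α_{H∩K}, β_{H∩K}]`; dropping every double coset but `H K`, which has
`|H| |K| / |H ∩ K|` elements, gives the inequality.
-/

section Characters

variable {S : Type*} [Group S]

lemma isChar_character {V : Type*} [AddCommGroup V] [Module ℂ V] [FiniteDimensional ℂ V]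
    (ρ : Representation ℂ S V) : IsChar S ρ.character :=
  let e := (Module.finBasis ℂ V).equivFun
  ⟨_, e.conjRingEquiv.toMonoidHom.comp ρ, fun g => (LinearMap.trace_conj' (ρ g) e).symm⟩

lemma trace_conjRingEquiv_starLinearEquiv {n : ℕ} (f : Module.End ℂ (Fin n → ℂ)) :
    LinearMap.trace ℂ _ ((starLinearEquiv ℂ (A := Fin n → ℂ)).conjRingEquiv f) =
      starRingEnd ℂ (LinearMap.trace ℂ _ f) := by
  simp [LinearMap.trace_eq_matrix_trace ℂ (Pi.basisFun ℂ (Fin n)), Matrix.trace]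

lemma IsChar.star {χ : S → ℂ} (hχ : IsChar S χ) : IsChar S (fun g => starRingEnd ℂ (χ g)) := by
  obtain ⟨n, ρ, hρ⟩ := hχ
  exact ⟨n, (starLinearEquiv ℂ).conjRingEquiv.toMonoidHom.comp ρ, fun g =>
    (congrArg _ (hρ g)).trans (trace_conjRingEquiv_starLinearEquiv (ρ g)).symm⟩

lemma IsChar.mul {χ ψ : S → ℂ} (hχ : IsChar S χ) (hψ : IsChar S ψ) : IsChar S (χ * ψ) := by
  obtain ⟨n, ρ, hρ⟩ := hχ
  obtain ⟨m, σ, hσ⟩ := hψ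
  convert isChar_character (ρ.tprod σ)
  rw [Representation.char_tensor]
  ext g
  exact congr_arg₂ (· * ·) (hρ g) (hσ g)

lemma IsChar.comp {S' : Type*} [Group S'] {χ : S → ℂ} (hχ : IsChar S χ) (f : S' →* S) :
    IsChar S' (χ ∘ f) := by
  obtain ⟨n, ρ, hρ⟩ := hχ
  exact ⟨n, ρ.comp f, fun g => hρ (f g)⟩

lemma IsChar.char_conj {χ : S → ℂ} (hχ : IsChar S χ) (a b : S) : χ (a * b * a⁻¹) = χ b := by
  obtain ⟨n, ρ, hρ⟩ := hχ
  rw [hρ, hρ]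
  exact Representation.char_conj ρ b a

variable [Fintype S]

lemma IsChar.sum_nonneg {χ : S → ℂ} (hχ : IsChar S χ) : 0 ≤ ∑ g, χ g := by
  obtain ⟨n, ρ, hρ⟩ := hχ
  have hcard : (Nat.card S : ℂ) ≠ 0 := by simp
  have : Invertible (Nat.card S : ℂ) := invertibleOfNonzero hcard
  have hinv := Representation.card_inv_mul_sum_char_eq_finrank ρ
  simp only [Representation.character, ← hρ] at hinv
  rw [← mul_inv_cancel_left₀ hcard (∑ g, χ g), hinv]
  positivity

lemma card_mul_charInner (f ψ : S → ℂ) :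
    Fintype.card S * charInner S f ψ = ∑ s, f s * starRingEnd ℂ (ψ s) := by
  rw [charInner, mul_inv_cancel_left₀ (by simp)]

lemma charInner_comp_equiv (e : S ≃ S) (f ψ : S → ℂ) :
    charInner S (f ∘ e) (ψ ∘ e) = charInner S f ψ :=
  congrArg _ (e.sum_comp fun s => f s * starRingEnd ℂ (ψ s))

end Characters

section Subgroups

variable {G : Type*} [Group G] [Fintype G] (H K : Subgroup G)

lemma card_filter_mul_eq_le_card_inf (x : G) :
    (Finset.univ.filter fun p : H × K => (p.1 : G) * p.2 = x).card ≤ Fintype.card ↥(H ⊓ K) := by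
  rw [← Fintype.card_subtype]
  rcases isEmpty_or_nonempty {p : H × K // (p.1 : G) * p.2 = x} with _ | ⟨⟨p₀, hp₀⟩⟩
  · simp
  have hmem : ∀ p : {p : H × K // (p.1 : G) * p.2 = x}, (p₀.1 : G)⁻¹ * p.1.1 ∈ H ⊓ K := by
    rintro ⟨p, hp⟩
    have hK : (p₀.1 : G)⁻¹ * p.1 = p₀.2 * (p.2 : G)⁻¹ := by
      rw [inv_mul_eq_iff_eq_mul, ← mul_assoc, hp₀, eq_mul_inv_iff_mul_eq, hp]
    exact ⟨H.mul_mem (H.inv_mem p₀.1.2) p.1.2, hK ▸ K.mul_mem p₀.2.2 (K.inv_mem p.2.2)⟩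
  refine Fintype.card_le_of_injective (fun p => ⟨_, hmem p⟩) fun ⟨p, hp⟩ ⟨q, hq⟩ hpq => ?_
  have h1 : (p.1 : G) = q.1 := mul_left_cancel (congrArg Subtype.val hpq)
  have h2 : (p.2 : G) = q.2 := mul_left_cancel ((hp.trans hq.symm).trans (by rw [h1]))
  exact Subtype.ext (Prod.ext (Subtype.ext h1) (Subtype.ext h2))

lemma sum_mul_le_card_inf_nsmul_sum {M : Type*} [AddCommMonoid M] [PartialOrder M]
    [IsOrderedAddMonoid M] (f : G → M) (hf : 0 ≤ f) :
    ∑ p : H × K, f (p.1 * p.2) ≤ Fintype.card ↥(H ⊓ K) • ∑ x, f x := by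
  rw [Finset.sum_comp, Finset.smul_sum]
  calc _ ≤ ∑ x ∈ Finset.univ.image fun p : H × K => (p.1 : G) * p.2,
          Fintype.card ↥(H ⊓ K) • f x :=
        Finset.sum_le_sum fun x _ =>
          nsmul_le_nsmul_left (hf x) (card_filter_mul_eq_le_card_inf H K x)
    _ ≤ _ := Finset.sum_le_sum_of_subset_of_nonneg (Finset.subset_univ _) fun x _ _ =>
          nsmul_nonneg (hf x) _

end Subgroups

section Mackey

variable {G : Type*} [Group G]

def extendByZero {M : Type*} [Zero M] (L : Subgroup G) (f : L → M) (g : G) : M :=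
  if h : g ∈ L then f ⟨g, h⟩ else 0

lemma sum_extendByZero [Fintype G] {M : Type*} [AddCommMonoid M] (L : Subgroup G) (f : L → M) :
    ∑ g, extendByZero L f g = ∑ l, f l := by
  have hout : ∀ g : {g // g ∉ L}, extendByZero L f g = 0 := fun g => dif_neg g.2
  rw [← Fintype.sum_subtype_add_sum_subtype (· ∈ L), Fintype.sum_eq_zero _ hout, add_zero]
  exact Fintype.sum_congr _ _ fun l => dif_pos l.2

lemma extendByZero_conj {M : Type*} [Zero M] {L : Subgroup G} {f : L → M}
    (hf : ∀ a b : L, f (a * b * a⁻¹) = f b) (a : L) (g : G) :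
    extendByZero L f (a * g * (a : G)⁻¹) = extendByZero L f g := by
  have hmem : (a : G) * g * (a : G)⁻¹ ∈ L ↔ g ∈ L := by
    rw [L.mul_mem_cancel_right (L.inv_mem a.2), L.mul_mem_cancel_left a.2]
  by_cases hg : g ∈ L
  · rw [extendByZero, extendByZero, dif_pos (hmem.mpr hg), dif_pos hg]
    exact hf a ⟨g, hg⟩
  · simp [extendByZero, hg, hmem]

variable [Fintype G] (H K : Subgroup G) (α : H → ℂ) (β : K → ℂ)

/-- The contribution of `x` to Mackey's formula for `[(α^G)_K, β]`. -/
def mackeyTerm (x : G) : ℂ :=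
  charInner K (fun k => extendByZero H α (x * k * x⁻¹)) β

lemma charInner_inducedChar :
    charInner K (fun k => inducedChar H α k) β =
      (Fintype.card H : ℂ)⁻¹ * ∑ x, mackeyTerm H K α β x := by
  simp only [charInner, inducedChar, mackeyTerm, extendByZero, Finset.mul_sum, Finset.sum_mul]
  rw [Finset.sum_comm]
  exact Finset.sum_congr rfl fun x _ => Finset.sum_congr rfl fun k _ => by ring

lemma mackeyTerm_nonneg (hα : IsChar H α) (hβ : IsChar K β) (x : G) :
    0 ≤ mackeyTerm H K α β x := by
  let φ : K →* G := (MulAut.conj x).toMonoidHom.comp K.subtype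
  let S : Subgroup K := H.comap φ
  let ψ : S →* H := (φ.comp S.subtype).codRestrict H fun s => s.2
  have hsum : ∑ k : K, extendByZero H α (x * k * x⁻¹) * starRingEnd ℂ (β k) =
      ∑ s : S, α (ψ s) * starRingEnd ℂ (β s) := by
    rw [← sum_extendByZero S fun s => α (ψ s) * starRingEnd ℂ (β s)]
    refine Fintype.sum_congr _ _ fun k => ?_
    have hmem : k ∈ S ↔ x * k * x⁻¹ ∈ H := Iff.rfl
    by_cases hk : k ∈ S
    · rw [extendByZero, extendByZero, dif_pos hk, dif_pos (hmem.mp hk)]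
      rfl
    · rw [extendByZero, extendByZero, dif_neg hk, dif_neg (mt hmem.mpr hk), zero_mul]
  rw [mackeyTerm, charInner, hsum]
  exact mul_nonneg (by positivity) ((hα.comp ψ).mul (hβ.comp S.subtype).star).sum_nonneg

lemma mackeyTerm_mul_left (hα : ∀ a b : H, α (a * b * a⁻¹) = α b) (h : H) (x : G) :
    mackeyTerm H K α β (h * x) = mackeyTerm H K α β x := by
  simp only [mackeyTerm]
  congr 1
  funext k
  rw [← extendByZero_conj hα h (x * k * x⁻¹)]
  congr 1
  group

lemma mackeyTerm_mul_right (hβ : ∀ a b : K, β (a * b * a⁻¹) = β b) (k₀ : K) (x : G) :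
    mackeyTerm H K α β (x * k₀) = mackeyTerm H K α β x := by
  have hβ' : β ∘ MulAut.conj k₀⁻¹ = β := funext (hβ k₀⁻¹)
  rw [mackeyTerm, mackeyTerm, ← charInner_comp_equiv (MulAut.conj k₀⁻¹).toEquiv,
    MulEquiv.toEquiv_eq_coe, MulEquiv.coe_toEquiv, hβ']
  congr 1
  funext k
  simp only [Function.comp_apply, MulAut.conj_apply, Subgroup.coe_mul, Subgroup.coe_inv]
  congr 1
  group

lemma card_inf_mul_charInner_resChar :
    Fintype.card ↥(H ⊓ K) *
        charInner ↥(H ⊓ K) (resChar inf_le_left α) (resChar inf_le_right β) =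
      Fintype.card K * mackeyTerm H K α β 1 := by
  have hHK : ∀ g, extendByZero (H ⊓ K)
      (fun j => resChar inf_le_left α j * starRingEnd ℂ (resChar inf_le_right β j)) g =
        extendByZero H α g * starRingEnd ℂ (extendByZero K β g) := by
    intro g
    by_cases hH : g ∈ H <;> by_cases hK : g ∈ K <;>
      simp [extendByZero, resChar, Subgroup.inclusion, hH, hK, Subgroup.mem_inf]
  have hK : ∀ g, extendByZero K (fun k => extendByZero H α k * starRingEnd ℂ (β k)) g =
      extendByZero H α g * starRingEnd ℂ (extendByZero K β g) := by
    intro g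
    by_cases hK : g ∈ K <;> simp [extendByZero, hK]
  rw [card_mul_charInner, mackeyTerm, card_mul_charInner, ← sum_extendByZero, ← sum_extendByZero]
  simp only [one_mul, inv_one, mul_one, hHK, hK]

end Mackey

/-- `[(α^G)_K, β] ≥ [α_{H∩K}, β_{H∩K}]` for irreducible characters
`α` of `H` and `β` of `K` (in the partial order on `ℂ`). -/
theorem induced_restrict_inner_ge {G : Type*} [Group G] [Fintype G]
    (H K : Subgroup G) (α : H → ℂ) (β : K → ℂ)
    (hα : IsIrrChar H α) (hβ : IsIrrChar K β) :
    charInner ↥(H ⊓ K) (resChar inf_le_left α) (resChar inf_le_right β) ≤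
      charInner K (fun k => inducedChar H α (k : G)) β := by
  have hT : ∀ p : H × K, mackeyTerm H K α β (p.1 * p.2) = mackeyTerm H K α β 1 := fun ⟨h, k⟩ => by
    rw [mackeyTerm_mul_left H K α β hα.1.char_conj, ← one_mul (k : G),
      mackeyTerm_mul_right H K α β hβ.1.char_conj]
  calc charInner ↥(H ⊓ K) (resChar inf_le_left α) (resChar inf_le_right β)
      = (Fintype.card H * Fintype.card ↥(H ⊓ K) : ℂ)⁻¹ *
          ∑ p : H × K, mackeyTerm H K α β (p.1 * p.2) := by
        rw [Fintype.sum_congr _ _ hT, Finset.sum_const, Finset.card_univ, Fintype.card_prod,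
          nsmul_eq_mul, Nat.cast_mul, mul_assoc, ← card_inf_mul_charInner_resChar]
        field_simp
    _ ≤ (Fintype.card H * Fintype.card ↥(H ⊓ K) : ℂ)⁻¹ *
          (Fintype.card ↥(H ⊓ K) • ∑ x, mackeyTerm H K α β x) := by
        gcongr
        exact sum_mul_le_card_inf_nsmul_sum H K _ (mackeyTerm_nonneg H K α β hα.1 hβ.1)
    _ = charInner K (fun k => inducedChar H α (k : G)) β := by
        rw [charInner_inducedChar, nsmul_eq_mul]
        field_simp
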